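/- Let W: [0,∞) → ℝ be continuously differentiable on (0,∞) and continuous at 0 with W(0) = 0, extended by 0 on (−∞,0), and let f: ℝ → ℝ be continuously differentiable. Then the function x ↦ Θ_f(x; A) := ∫_A^x W(x − y) f(y) dy is continuously differentiable on (A, ∞) with derivative Θ_f'(x; A) = f(A) W(x − A) + ∫_A^x f'(y) W(x − y) dy, and Θ_f'(x; A) → 0 as x ↓ A. -/

import Mathlib

/-!
Extended by zero, `W` is continuous on `ℝ`; let `V s = ∫₀ˢ W`, which vanishes on `(-∞, 0]`.
Integrating by parts moves the kernel's derivative onto `f`: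
`Θ(x) = f(A) V(x - A) + ∫_A^x f'(y) V(x - y) dy`.
Since `V (x - y) = 0` for `y ≥ x`, the upper limit may be frozen at any `B ≥ x`, and
differentiating under the integral sign (now legitimate, as `∂ₓ V(x - y) = W(x - y)` is
continuous) gives `Θ' x = f(A) W(x - A) + ∫_A^x f'(y) W(x - y) dy`, again unfreezing the limit.
This is continuous, and equals `0` at `x = A` because `W 0 = 0`.
-/

open MeasureTheory Set Filter intervalIntegral

theorem continuous_of_continuousOn_Ioi_of_eq_zero {W : ℝ → ℝ}
    (hpos : ContinuousOn W (Ioi 0)) (h0 : ContinuousAt W 0) (hneg : ∀ y < 0, W y = 0) :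
    Continuous W := by
  refine continuous_iff_continuousAt.2 fun x => ?_
  rcases lt_trichotomy x 0 with hx | rfl | hx
  · refine continuousAt_const.congr (f := fun _ => (0 : ℝ)) ?_
    filter_upwards [Iio_mem_nhds hx] with y hy using (hneg y hy).symm
  · exact h0
  · exact hpos.continuousAt (Ioi_mem_nhds hx)

theorem integral_zero_eq_zero_of_nonpos {W : ℝ → ℝ} (hW : ∀ y ≤ 0, W y = 0) {s : ℝ}
    (hs : s ≤ 0) : ∫ u in (0 : ℝ)..s, W u = 0 := by
  have hzero : EqOn W 0 (uIcc 0 s) := fun u hu => by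
    rw [uIcc_of_ge hs] at hu
    exact hW u hu.2
  exact (integral_congr hzero).trans integral_zero

theorem integral_mul_comp_sub_eq_of_le {h g : ℝ → ℝ} (hh : Continuous h) (hg : Continuous g)
    (hg0 : ∀ z ≤ 0, g z = 0) (A : ℝ) {x B : ℝ} (hxB : x ≤ B) :
    ∫ y in A..x, h y * g (x - y) = ∫ y in A..B, h y * g (x - y) := by
  have hcont : Continuous fun y => h y * g (x - y) := by fun_prop
  have htail : ∫ y in x..B, h y * g (x - y) = 0 := by
    have hzero : EqOn (fun y => h y * g (x - y)) 0 (uIcc x B) := fun y hy => by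
      rw [uIcc_of_le hxB] at hy
      simp [hg0 (x - y) (by linarith [hy.1])]
    exact (integral_congr hzero).trans integral_zero
  rw [← integral_add_adjacent_intervals (hcont.intervalIntegrable A x)
    (hcont.intervalIntegrable x B), htail, add_zero]

theorem integral_comp_sub_mul_eq_add_integral_deriv_mul {W V f f' : ℝ → ℝ}
    (hW : Continuous W) (hV : ∀ s, HasDerivAt V (W s) s) (hV0 : V 0 = 0)
    (hf : ∀ y, HasDerivAt f (f' y) y) (hf' : Continuous f') (A x : ℝ) :
    ∫ y in A..x, W (x - y) * f y = f A * V (x - A) + ∫ y in A..x, f' y * V (x - y) := by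
  have hV' : ∀ y, HasDerivAt (fun y => -V (x - y)) (W (x - y)) y := fun y =>
    ((hV (x - y)).comp_const_sub x y).neg.congr_deriv (neg_neg _)
  have ibp := integral_mul_deriv_eq_deriv_mul (fun y _ => hf y) (fun y _ => hV' y)
    (hf'.intervalIntegrable A x) ((hW.comp (continuous_sub_left x)).intervalIntegrable A x)
  simp only [sub_self, hV0, mul_neg, mul_zero, neg_zero, intervalIntegral.integral_neg,
    sub_neg_eq_add] at ibp
  simp only [mul_comm (W _), ibp]
  ring

theorem hasDerivAt_intervalIntegral_of_continuous {F F' : ℝ → ℝ → ℝ}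
    (hF : Continuous (Function.uncurry F)) (hF' : Continuous (Function.uncurry F'))
    (hderiv : ∀ x y, HasDerivAt (fun x => F x y) (F' x y) x) (a b x₀ : ℝ) :
    HasDerivAt (fun x => ∫ y in a..b, F x y) (∫ y in a..b, F' x₀ y) x₀ := by
  obtain ⟨M, hM⟩ : ∃ M, ∀ p ∈ Metric.closedBall x₀ 1 ×ˢ uIcc a b, ‖Function.uncurry F' p‖ ≤ M :=
    ((isCompact_closedBall x₀ 1).prod isCompact_uIcc).exists_bound_of_continuousOn
      hF'.continuousOn
  have hbound : ∀ᵐ t, t ∈ uIoc a b → ∀ x ∈ Metric.ball x₀ 1, ‖F' x t‖ ≤ M :=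
    ae_of_all _ fun t ht x hx =>
      hM (x, t) ⟨Metric.ball_subset_closedBall hx, uIoc_subset_uIcc ht⟩
  exact (hasDerivAt_integral_of_dominated_loc_of_deriv_le (Metric.ball_mem_nhds x₀ one_pos)
    (Eventually.of_forall fun x => (hF.uncurry_left x).aestronglyMeasurable)
    ((hF.uncurry_left x₀).intervalIntegrable a b) (hF'.uncurry_left x₀).aestronglyMeasurable
    hbound intervalIntegrable_const (ae_of_all _ fun t _ x _ => hderiv x t)).2

theorem hasDerivAt_integral_comp_sub_mul {W f f' : ℝ → ℝ} (hW : Continuous W)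
    (hW0 : ∀ y ≤ 0, W y = 0) (hf : ∀ y, HasDerivAt f (f' y) y) (hf' : Continuous f')
    (A x₀ : ℝ) :
    HasDerivAt (fun x => ∫ y in A..x, W (x - y) * f y)
      (f A * W (x₀ - A) + ∫ y in A..x₀, f' y * W (x₀ - y)) x₀ := by
  set V : ℝ → ℝ := fun s => ∫ u in (0 : ℝ)..s, W u
  have hV : ∀ s, HasDerivAt V (W s) s := fun s => (hW.integral_hasStrictDerivAt 0 s).hasDerivAt
  have hVcont : Continuous V := continuous_iff_continuousAt.2 fun s => (hV s).continuousAt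
  have hV0 : ∀ s ≤ 0, V s = 0 := fun s => integral_zero_eq_zero_of_nonpos hW0
  have hV_sub : ∀ x y, HasDerivAt (fun x => V (x - y)) (W (x - y)) x := fun x y =>
    (hV (x - y)).comp_sub_const x y
  set B := x₀ + 1
  have hfrozen : HasDerivAt (fun x => f A * V (x - A) + ∫ y in A..B, f' y * V (x - y))
      (f A * W (x₀ - A) + ∫ y in A..B, f' y * W (x₀ - y)) x₀ :=
    ((hV_sub x₀ A).const_mul (f A)).add <|
      hasDerivAt_intervalIntegral_of_continuous (by fun_prop) (by fun_prop)
        (fun x y => (hV_sub x y).const_mul (f' y)) A B x₀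
  rw [← integral_mul_comp_sub_eq_of_le hf' hW hW0 A (by linarith : x₀ ≤ B)] at hfrozen
  refine hfrozen.congr_of_eventuallyEq ?_
  filter_upwards [Iio_mem_nhds (by linarith : x₀ < B)] with x hx
  rw [integral_comp_sub_mul_eq_add_integral_deriv_mul hW hV (hV0 0 le_rfl) hf hf',
    integral_mul_comp_sub_eq_of_le hf' hVcont hV0 A hx.le]

/-- Continuous differentiability of `x ↦ Θ_f(x;A)` on `(A,∞)` with derivative
`f(A)W(x−A) + ∫_A^x f'(y)W(x−y)dy`, tending to `0` as `x ↓ A`. -/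
theorem theta_derivative (W : ℝ → ℝ)
    (hW1 : ContDiffOn ℝ 1 W (Set.Ioi 0))
    (hWc : ContinuousAt W 0) (hWz : ∀ y : ℝ, y ≤ 0 → W y = 0)
    (f : ℝ → ℝ) (hf : ContDiff ℝ 1 f) (A : ℝ)
    (Θ' : ℝ → ℝ)
    (hΘ' : ∀ x : ℝ, Θ' x = f A * W (x - A) + ∫ y in A..x, deriv f y * W (x - y)) :
    (∀ x ∈ Set.Ioi A, HasDerivAt (fun x => ∫ y in A..x, W (x - y) * f y) (Θ' x) x)
    ∧ ContinuousOn Θ' (Set.Ioi A)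
    ∧ Tendsto Θ' (nhdsWithin A (Set.Ioi A)) (nhds 0) := by
  have hW : Continuous W :=
    continuous_of_continuousOn_Ioi_of_eq_zero hW1.continuousOn hWc fun y hy => hWz y hy.le
  have hf' : Continuous (deriv f) := hf.continuous_deriv le_rfl
  have hΘ'_eq : Θ' = fun x => f A * W (x - A) + ∫ y in A..x, deriv f y * W (x - y) := funext hΘ'
  have hΘ'_cont : Continuous Θ' := by
    rw [hΘ'_eq]
    exact (continuous_const.mul (hW.comp (continuous_sub_right A))).add
      (continuous_parametric_intervalIntegral_of_continuous (by fun_prop) continuous_id)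
  have hΘ'_A : Θ' A = 0 := by simp [hΘ', hWz 0 le_rfl]
  refine ⟨fun x _ => ?_, hΘ'_cont.continuousOn, ?_⟩
  · rw [hΘ' x]
    exact hasDerivAt_integral_comp_sub_mul hW hWz
      (fun y => (hf.differentiable one_ne_zero y).hasDerivAt) hf' A x
  · simpa [hΘ'_A] using (hΘ'_cont.tendsto A).mono_left nhdsWithin_le_nhds
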